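/- arXiv:2004.14697 — 3 statements merged into one kernel-verified Lean document; each statement's English description precedes it below -/
import Mathlib

section
/- Let Ω ⊆ ℝ^n be open and u : Ω → ℝ a smooth function whose Hessian matrix H(x) = (∂²u/∂x^i∂x^j(x)) is positive definite at every point of Ω; write (u^{ij}) for the entries of H^{-1} and V = (det H)^{-1/2}. Then the function s := −(1/2) ∑_{i,j=1}^n ∂²u^{ij}/∂x^i∂x^j (Abreu's formula for the scalar curvature of the associated toric Kähler metric) satisfies, at every point of Ω, s = −∑_{i,j=1}^n ∂/∂x^i ( u^{ij} ∂(log V)/∂x^j ). -/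
open Real Set Topology Filter Matrix

/-- `i`-th partial derivative of a function on `ℝⁿ`. -/
noncomputable def pd {n : ℕ} (i : Fin n) (f : (Fin n → ℝ) → ℝ) : (Fin n → ℝ) → ℝ :=
  fun x => fderiv ℝ f x (Pi.single i 1)

/-- Hessian matrix of a function on `ℝⁿ`. -/
noncomputable def Hess {n : ℕ} (u : (Fin n → ℝ) → ℝ) (x : Fin n → ℝ) :
    Matrix (Fin n) (Fin n) ℝ :=
  Matrix.of fun i j => pd i (pd j u) x

/-- The orbital volume function `V = (det Hess u)^(-1/2)`. -/
noncomputable def orbVol {n : ℕ} (u : (Fin n → ℝ) → ℝ) : (Fin n → ℝ) → ℝ :=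
  fun x => (Hess u x).det ^ (-(1/2 : ℝ))

/-!
Write `H = Hess u`, `W = H⁻¹` and `Tⱼ = ∂ⱼH`, so that `(Tⱼ)ₖₗ = ∂ⱼ∂ₖ∂ₗu` is symmetric in all
three indices. Jacobi's formula gives `∂ⱼ log V = -½ tr (W Tⱼ)`, and differentiating `W H = 1`
gives `∂ⱼ W = -W Tⱼ W`. The symmetry `(Tⱼ)ₖₗ = (Tₖ)ⱼₗ` turns `∑ⱼ Wᵢⱼ tr (W Tⱼ)` into
`∑ⱼ (W Tⱼ W)ᵢⱼ`, hence `∑ⱼ Wᵢⱼ ∂ⱼ log V = ½ ∑ⱼ ∂ⱼ Wᵢⱼ`; applying `∂ᵢ` and summing over `i`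
gives the identity.
-/

open scoped ContDiff

section PartialDerivative

variable {n : ℕ} {f g : (Fin n → ℝ) → ℝ} {x : Fin n → ℝ} {s : Set (Fin n → ℝ)}

lemma pd_congr_of_eventuallyEq (i : Fin n) (h : f =ᶠ[𝓝 x] g) : pd i f x = pd i g x := by
  simp only [pd, h.fderiv_eq]

lemma pd_fun_sum {ι : Type*} {t : Finset ι} {F : ι → (Fin n → ℝ) → ℝ} (i : Fin n)
    (hF : ∀ k ∈ t, DifferentiableAt ℝ (F k) x) :
    pd i (fun z => ∑ k ∈ t, F k z) x = ∑ k ∈ t, pd i (F k) x := by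
  simp [pd, fderiv_fun_sum hF]

lemma pd_const_mul (i : Fin n) (c : ℝ) (hf : DifferentiableAt ℝ f x) :
    pd i (fun z => c * f z) x = c * pd i f x := by
  simp [pd, fderiv_const_mul hf]

lemma ContDiffOn.pd (hs : IsOpen s) (hf : ContDiffOn ℝ ∞ f s) (i : Fin n) :
    ContDiffOn ℝ ∞ (pd i f) s :=
  (hf.fderiv_of_isOpen hs le_rfl).clm_apply contDiffOn_const

lemma pd_pd_comm (hf : ContDiffAt ℝ 2 f x) (i j : Fin n) :
    pd i (pd j f) x = pd j (pd i f) x := by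
  have hd : DifferentiableAt ℝ (fderiv ℝ f) x :=
    (hf.fderiv_right (m := 1) le_rfl).differentiableAt one_ne_zero
  have h (a b : Fin n) :
      pd a (pd b f) x = fderiv ℝ (fderiv ℝ f) x (Pi.single a 1) (Pi.single b 1) := by
    change fderiv ℝ (fun z => fderiv ℝ f z (Pi.single b 1)) x (Pi.single a 1) = _
    simp [fderiv_clm_apply hd (differentiableAt_const _)]
  rw [h, h, hf.isSymmSndFDerivAt (by simp)]

end PartialDerivative

section MatrixCalculus

variable {E : Type*} [NormedAddCommGroup E] [NormedSpace ℝ E]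
  {m : Type*} [Fintype m] {A : E → Matrix m m ℝ} {x : E} {s : Set E}

noncomputable def matrixFDeriv (A : E → Matrix m m ℝ) (x v : E) : Matrix m m ℝ :=
  of fun i j => fderiv ℝ (fun z => A z i j) x v

lemma matrixFDeriv_mul {B : E → Matrix m m ℝ}
    (hA : ∀ i j, DifferentiableAt ℝ (fun z => A z i j) x)
    (hB : ∀ i j, DifferentiableAt ℝ (fun z => B z i j) x) (v : E) :
    matrixFDeriv (fun z => A z * B z) x v
      = matrixFDeriv A x v * B x + A x * matrixFDeriv B x v := by
  ext i j
  change fderiv ℝ (fun z => ∑ k, A z i k * B z k j) x v = _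
  rw [fderiv_fun_sum fun k _ => (hA i k).fun_mul (hB k j)]
  simp [matrixFDeriv, mul_apply, fderiv_fun_mul (hA _ _) (hB _ _), Finset.sum_add_distrib,
    mul_comm, add_comm]

variable [DecidableEq m]

lemma det_updateRow_eq_sum_mul_adjugate (M : Matrix m m ℝ) (i : m) (b : m → ℝ) :
    (M.updateRow i b).det = ∑ j, b j * M.adjugate j i := by
  rw [← cramer_transpose_apply, cramer_eq_adjugate_mulVec, ← adjugate_transpose, mulVec,
    dotProduct]
  simp [mul_comm]

noncomputable def detRowMultilinear (m : Type*) [Fintype m] [DecidableEq m] :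
    ContinuousMultilinearMap ℝ (fun _ : m => m → ℝ) ℝ :=
  { (detRowAlternating : (m → ℝ) [⋀^m]→ₗ[ℝ] ℝ).toMultilinearMap with
    cont := (continuous_id (X := Matrix m m ℝ)).matrix_det }

theorem hasFDerivAt_det (hA : ∀ i j, DifferentiableAt ℝ (fun z => A z i j) x) :
    HasFDerivAt (fun z => (A z).det)
      (∑ i, ∑ j, (A x).adjugate j i • fderiv ℝ (fun z => A z i j) x) x := by
  have hrow (i : m) : HasFDerivAt (fun z => A z i)
      (ContinuousLinearMap.pi fun j => fderiv ℝ (fun z => A z i j) x) x :=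
    hasFDerivAt_pi.2 fun j => (hA i j).hasFDerivAt
  refine (HasFDerivAt.multilinear_comp (detRowMultilinear m) hrow).congr_fderiv ?_
  ext v
  simp only [FunLike.coe_sum, ContinuousLinearMap.coe_comp, Finset.sum_apply,
    Function.comp_apply, FunLike.coe_smul, Pi.smul_apply, smul_eq_mul]
  refine Finset.sum_congr rfl fun i _ => ?_
  exact (det_updateRow_eq_sum_mul_adjugate (A x) i _).trans (by simp [mul_comm])

lemma fderiv_det_apply (hA : ∀ i j, DifferentiableAt ℝ (fun z => A z i j) x) (v : E) :
    fderiv ℝ (fun z => (A z).det) x v = trace ((A x).adjugate * matrixFDeriv A x v) := by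
  rw [(hasFDerivAt_det hA).fderiv, trace, Finset.sum_comm]
  simp [matrixFDeriv, mul_apply]

lemma fderiv_log_det_apply (hA : ∀ i j, DifferentiableAt ℝ (fun z => A z i j) x)
    (hdet : (A x).det ≠ 0) (v : E) :
    fderiv ℝ (fun z => Real.log (A z).det) x v = trace ((A x)⁻¹ * matrixFDeriv A x v) := by
  rw [((hasFDerivAt_det hA).log hdet).fderiv, _root_.smul_apply, smul_eq_mul,
    ← (hasFDerivAt_det hA).fderiv, fderiv_det_apply hA, inv_def, Ring.inverse_eq_inv',
    smul_mul_assoc, trace_smul, smul_eq_mul]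

lemma matrixFDeriv_inv (hA : ∀ i j, DifferentiableAt ℝ (fun z => A z i j) x)
    (hinv : ∀ i j, DifferentiableAt ℝ (fun z => (A z)⁻¹ i j) x)
    (hunit : ∀ᶠ z in 𝓝 x, IsUnit (A z)) (v : E) :
    matrixFDeriv (fun z => (A z)⁻¹) x v = -((A x)⁻¹ * matrixFDeriv A x v * (A x)⁻¹) := by
  set D := matrixFDeriv (fun z => (A z)⁻¹) x v
  have hprod : D * A x + (A x)⁻¹ * matrixFDeriv A x v = 0 := by
    rw [← matrixFDeriv_mul hinv hA]
    ext i j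
    have hconst : (fun z => ((A z)⁻¹ * A z) i j) =ᶠ[𝓝 x] fun _ => (1 : Matrix m m ℝ) i j := by
      filter_upwards [hunit] with z hz
      rw [nonsing_inv_mul _ ((isUnit_iff_isUnit_det _).1 hz)]
    simp [matrixFDeriv, hconst.fderiv_eq]
  have hx : A x * (A x)⁻¹ = 1 :=
    mul_nonsing_inv _ ((isUnit_iff_isUnit_det _).1 hunit.self_of_nhds)
  calc D = D * A x * (A x)⁻¹ := by rw [Matrix.mul_assoc, hx, Matrix.mul_one]
    _ = _ := by rw [eq_neg_of_add_eq_zero_left hprod, Matrix.neg_mul]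

lemma ContDiffOn.matrix_det {k : WithTop ℕ∞} (hA : ∀ i j, ContDiffOn ℝ k (fun z => A z i j) s) :
    ContDiffOn ℝ k (fun z => (A z).det) s := by
  simp only [det_apply]
  exact ContDiffOn.sum fun σ _ => (contDiffOn_prod fun i _ => hA _ _).const_smul _

lemma ContDiffOn.matrix_inv_apply {k : WithTop ℕ∞}
    (hA : ∀ i j, ContDiffOn ℝ k (fun z => A z i j) s)
    (hdet : ∀ z ∈ s, (A z).det ≠ 0) (i j : m) :
    ContDiffOn ℝ k (fun z => (A z)⁻¹ i j) s := by
  have hinv : (fun z => (A z)⁻¹ i j)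
      = fun z => (A z).det⁻¹ * ((A z).updateRow j (Pi.single i 1)).det := by
    ext z
    rw [inv_def, Ring.inverse_eq_inv', Matrix.smul_apply, smul_eq_mul, adjugate_apply]
  rw [hinv]
  refine ((ContDiffOn.matrix_det hA).inv hdet).mul
    (ContDiffOn.matrix_det (A := fun z => (A z).updateRow j (Pi.single i 1)) fun a b => ?_)
  simp only [updateRow_apply]
  split_ifs
  exacts [contDiffOn_const, hA a b]

end MatrixCalculus

lemma sum_mul_trace_mul_eq_sum_mul_mul_apply {m R : Type*} [Fintype m] [CommSemiring R]
    (W : Matrix m m R) (T : m → Matrix m m R) (hT : ∀ j k l, T j k l = T k j l) (i : m) :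
    ∑ j, W i j * trace (W * T j) = ∑ j, (W * T j * W) i j := by
  simp only [trace, diag_apply, mul_apply, Finset.mul_sum, Finset.sum_mul]
  rw [Finset.sum_comm]
  conv_rhs => rw [Finset.sum_comm]
  refine Finset.sum_congr rfl fun b _ => ?_
  conv_rhs => rw [Finset.sum_comm]
  refine Finset.sum_congr rfl fun a _ => Finset.sum_congr rfl fun c _ => ?_
  rw [hT]
  ring

section Hessian

variable {n : ℕ} {Ω : Set (Fin n → ℝ)} {u : (Fin n → ℝ) → ℝ} {y : Fin n → ℝ}

lemma contDiffOn_hess_apply (hΩ : IsOpen Ω) (hu : ContDiffOn ℝ ∞ u Ω) (i j : Fin n) :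
    ContDiffOn ℝ ∞ (fun z => Hess u z i j) Ω :=
  (hu.pd hΩ j).pd hΩ i

lemma differentiableAt_hess_apply (hΩ : IsOpen Ω) (hu : ContDiffOn ℝ ∞ u Ω) (hy : y ∈ Ω)
    (i j : Fin n) : DifferentiableAt ℝ (fun z => Hess u z i j) y :=
  ((contDiffOn_hess_apply hΩ hu i j).contDiffAt (hΩ.mem_nhds hy)).differentiableAt (by simp)

lemma contDiffOn_inv_hess_apply (hΩ : IsOpen Ω) (hu : ContDiffOn ℝ ∞ u Ω)
    (hpos : ∀ x ∈ Ω, (Hess u x).PosDef) (i j : Fin n) :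
    ContDiffOn ℝ ∞ (fun z => (Hess u z)⁻¹ i j) Ω :=
  ContDiffOn.matrix_inv_apply (contDiffOn_hess_apply hΩ hu) (fun z hz => (hpos z hz).det_pos.ne')
    i j

lemma log_orbVol_eqOn (hpos : ∀ x ∈ Ω, (Hess u x).PosDef) :
    EqOn (fun z => Real.log (orbVol u z)) (fun z => -(1/2 : ℝ) * Real.log (Hess u z).det) Ω :=
  fun z hz => Real.log_rpow (hpos z hz).det_pos _

lemma contDiffOn_log_orbVol (hΩ : IsOpen Ω) (hu : ContDiffOn ℝ ∞ u Ω)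
    (hpos : ∀ x ∈ Ω, (Hess u x).PosDef) :
    ContDiffOn ℝ ∞ (fun z => Real.log (orbVol u z)) Ω :=
  (contDiffOn_const.mul ((ContDiffOn.matrix_det (contDiffOn_hess_apply hΩ hu)).log
    fun z hz => (hpos z hz).det_pos.ne')).congr (log_orbVol_eqOn hpos)

lemma pd_log_orbVol (hΩ : IsOpen Ω) (hu : ContDiffOn ℝ ∞ u Ω)
    (hpos : ∀ x ∈ Ω, (Hess u x).PosDef) (hy : y ∈ Ω) (j : Fin n) :
    pd j (fun z => Real.log (orbVol u z)) y
      = -(1/2 : ℝ) * trace ((Hess u y)⁻¹ * matrixFDeriv (Hess u) y (Pi.single j 1)) := by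
  have hH := differentiableAt_hess_apply hΩ hu hy
  have hdet := (hpos y hy).det_pos.ne'
  rw [pd_congr_of_eventuallyEq j ((log_orbVol_eqOn hpos).eventuallyEq_of_mem (hΩ.mem_nhds hy)),
    pd_const_mul j _ ((hasFDerivAt_det hH).differentiableAt.log hdet), pd,
    fderiv_log_det_apply hH hdet]

lemma pd_inv_hess_apply (hΩ : IsOpen Ω) (hu : ContDiffOn ℝ ∞ u Ω)
    (hpos : ∀ x ∈ Ω, (Hess u x).PosDef) (hy : y ∈ Ω) (i j k : Fin n) :
    pd k (fun z => (Hess u z)⁻¹ i j) y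
      = -((Hess u y)⁻¹ * matrixFDeriv (Hess u) y (Pi.single k 1) * (Hess u y)⁻¹) i j := by
  have hH := differentiableAt_hess_apply hΩ hu hy
  have hW (k l : Fin n) : DifferentiableAt ℝ (fun z => (Hess u z)⁻¹ k l) y :=
    ((contDiffOn_inv_hess_apply hΩ hu hpos k l).contDiffAt (hΩ.mem_nhds hy)).differentiableAt
      (by simp)
  have hunit : ∀ᶠ z in 𝓝 y, IsUnit (Hess u z) := by
    filter_upwards [hΩ.mem_nhds hy] with z hz
    exact (hpos z hz).isUnit
  exact congrFun₂ (matrixFDeriv_inv hH hW hunit (Pi.single k 1)) i j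

lemma matrixFDeriv_hess_comm (hΩ : IsOpen Ω) (hu : ContDiffOn ℝ ∞ u Ω) (hy : y ∈ Ω)
    (j k l : Fin n) :
    matrixFDeriv (Hess u) y (Pi.single j 1) k l = matrixFDeriv (Hess u) y (Pi.single k 1) j l :=
  pd_pd_comm (((hu.pd hΩ l).contDiffAt (hΩ.mem_nhds hy)).of_le (by norm_cast)) j k

lemma sum_inv_hess_mul_pd_log_orbVol (hΩ : IsOpen Ω) (hu : ContDiffOn ℝ ∞ u Ω)
    (hpos : ∀ x ∈ Ω, (Hess u x).PosDef) (hy : y ∈ Ω) (i : Fin n) :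
    ∑ j, (Hess u y)⁻¹ i j * pd j (fun z => Real.log (orbVol u z)) y
      = (1/2 : ℝ) * ∑ j, pd j (fun z => (Hess u z)⁻¹ i j) y := by
  set W := (Hess u y)⁻¹
  set T := fun j => matrixFDeriv (Hess u) y (Pi.single j 1)
  calc ∑ j, W i j * pd j (fun z => Real.log (orbVol u z)) y
      = -(1/2 : ℝ) * ∑ j, W i j * trace (W * T j) := by
        simp only [pd_log_orbVol hΩ hu hpos hy, Finset.mul_sum]
        exact Finset.sum_congr rfl fun j _ => by ring
    _ = -(1/2 : ℝ) * ∑ j, (W * T j * W) i j := by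
        rw [sum_mul_trace_mul_eq_sum_mul_mul_apply W T (matrixFDeriv_hess_comm hΩ hu hy)]
    _ = (1/2 : ℝ) * ∑ j, pd j (fun z => (Hess u z)⁻¹ i j) y := by
        simp only [pd_inv_hess_apply hΩ hu hpos hy, Finset.sum_neg_distrib]
        ring

end Hessian

theorem stmt3 (n : ℕ) (Ω : Set (Fin n → ℝ)) (hΩ : IsOpen Ω)
    (u : (Fin n → ℝ) → ℝ) (hu : ContDiffOn ℝ (⊤ : ℕ∞) u Ω)
    (hpos : ∀ x ∈ Ω, (Hess u x).PosDef)
    (x : Fin n → ℝ) (hx : x ∈ Ω) :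
    -(1/2 : ℝ) * ∑ i, ∑ j, pd i (pd j (fun y => ((Hess u y)⁻¹) i j)) x
      = -∑ i, ∑ j, pd i (fun y => ((Hess u y)⁻¹) i j
          * pd j (fun z => Real.log (orbVol u z)) y) x := by
  have hdiff {f : (Fin n → ℝ) → ℝ} (hf : ContDiffOn ℝ ∞ f Ω) : DifferentiableAt ℝ f x :=
    (hf.contDiffAt (hΩ.mem_nhds hx)).differentiableAt (by simp)
  have hW := contDiffOn_inv_hess_apply hΩ hu hpos
  have hL := contDiffOn_log_orbVol hΩ hu hpos
  have hrow (i : Fin n) :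
      ∑ j, pd i (fun y => (Hess u y)⁻¹ i j * pd j (fun z => Real.log (orbVol u z)) y) x
        = (1/2 : ℝ) * ∑ j, pd i (pd j (fun y => (Hess u y)⁻¹ i j)) x := by
    rw [← pd_fun_sum i fun j _ => (hdiff (hW i j)).fun_mul (hdiff (hL.pd hΩ j)),
      pd_congr_of_eventuallyEq i (eventually_of_mem (hΩ.mem_nhds hx)
        fun y hy => sum_inv_hess_mul_pd_log_orbVol hΩ hu hpos hy i),
      pd_const_mul i _ (DifferentiableAt.fun_sum fun j _ => hdiff ((hW i j).pd hΩ j)),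
      pd_fun_sum i fun j _ => hdiff ((hW i j).pd hΩ j)]
  simp only [hrow, ← Finset.mul_sum]
  ring
end

section
/- Let Ω ⊆ ℝ^n be open and u : Ω → ℝ a smooth function whose Hessian matrix H(x) is positive definite at every point of Ω; write (u_{ij}) for the entries of H, (u^{ij}) for the entries of H^{-1}, V = (det H)^{-1/2}, and R(x) for the matrix with entries R_{ij}(x) = −∑_{l,k=1}^n u_{il}(x) ∂/∂x^j ( u^{lk} ∂(log V)/∂x^k )(x). Let x₀ ∈ Ω be a critical point of V. If R(x₀) is positive definite, then x₀ is a strict local maximum of V and is an isolated critical point of V; if R(x₀) is negative definite, then x₀ is a strict local minimum of V and is an isolated critical point of V. -/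
/-!
At a critical point `x₀` of `V`, hence of `log V`, the product rule kills the first-order term in
`∂ⱼ (u^{lk} ∂ₖ log V)`, and contracting with `u_{il} u^{lk} = δ_{ik}` leaves
`R(x₀) = -Hess (log V)(x₀)`. So if `R(x₀)` is positive definite, the derivative `B` of the
gradient `g` of `log V` at `x₀` satisfies `B v v ≤ -C ‖v‖²` (compactness of the unit sphere).
Then `g z (z - x₀) < 0` near `x₀`, and the mean value theorem along segments makes `x₀` a strict
local maximum of `log V`, hence of `V`; and `B` is bounded below, so `g` (equivalently `dV`)
does not vanish on a punctured neighbourhood of `x₀`. The negative definite case is symmetric.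
-/

open Real Set Topology Filter Matrix

/-- Action–action components of the Ricci tensor of the toric Kähler metric with
symplectic potential `u`, in action coordinates. -/
noncomputable def ricA {n : ℕ} (u : (Fin n → ℝ) → ℝ) (x : Fin n → ℝ) :
    Matrix (Fin n) (Fin n) ℝ :=
  Matrix.of fun i j =>
    -(∑ l, ∑ k, Hess u x i l
        * pd j (fun y => ((Hess u y)⁻¹) l k
            * pd k (fun z => Real.log (orbVol u z)) y) x)

open scoped ContDiff

section SecondDerivativeTest

variable {E : Type*} [NormedAddCommGroup E] [NormedSpace ℝ E]
  {B : E →L[ℝ] E →L[ℝ] ℝ}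

theorem IsCoercive.of_forall_pos [FiniteDimensional ℝ E] (hB : ∀ v, v ≠ 0 → 0 < B v v) :
    IsCoercive B := by
  have hcont : Continuous fun v => B v v := by fun_prop
  obtain ⟨C, hC, hCle⟩ := (isCompact_sphere (0 : E) 1).exists_forall_le' hcont.continuousOn
    (a := 0) fun v hv => hB v (ne_zero_of_mem_unit_sphere ⟨v, hv⟩)
  refine ⟨C, hC, fun v => ?_⟩
  rcases eq_or_ne v 0 with rfl | hv
  · simp
  have hnorm : 0 < ‖v‖ := norm_pos_iff.2 hv
  have hw : ‖v‖⁻¹ • v ∈ Metric.sphere (0 : E) 1 := by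
    simp [norm_smul, hnorm.ne']
  have hscale : B v v = ‖v‖ ^ 2 * B (‖v‖⁻¹ • v) (‖v‖⁻¹ • v) := by
    simp only [map_smul, _root_.smul_apply, smul_eq_mul]
    field_simp
  calc C * ‖v‖ * ‖v‖ = ‖v‖ ^ 2 * C := by ring
    _ ≤ B v v := hscale ▸ mul_le_mul_of_nonneg_left (hCle _ hw) (sq_nonneg _)

theorem IsCoercive.exists_antilipschitzWith (hB : IsCoercive B) :
    ∃ K, AntilipschitzWith K B := by
  obtain ⟨C, hC, hCB⟩ := hB
  refine ⟨C⁻¹.toNNReal, B.antilipschitz_of_bound fun v => ?_⟩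
  rw [Real.coe_toNNReal _ (inv_nonneg.2 hC.le), inv_mul_eq_div, le_div_iff₀ hC]
  rcases eq_or_ne v 0 with rfl | hv
  · simp
  refine le_of_mul_le_mul_right ?_ (norm_pos_iff.2 hv)
  calc ‖v‖ * C * ‖v‖ = C * ‖v‖ * ‖v‖ := by ring
    _ ≤ B v v := hCB v
    _ ≤ ‖B v‖ * ‖v‖ := (le_abs_self _).trans ((B v).le_opNorm v)

variable {f : E → ℝ} {g : E → StrongDual ℝ E} {x₀ : E}

theorem IsCoercive.eventually_pos_apply_sub (hB : IsCoercive B) (hg : HasFDerivAt g B x₀)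
    (hg₀ : g x₀ = 0) : ∀ᶠ z in 𝓝 x₀, z ≠ x₀ → 0 < g z (z - x₀) := by
  obtain ⟨C, hC, hCB⟩ := hB
  -- `g z (z - x₀) = B (z - x₀) (z - x₀) + o(‖z - x₀‖²)`
  filter_upwards [hg.isLittleO.bound (half_pos hC)] with z hz hne
  have hw : 0 < ‖z - x₀‖ := norm_pos_iff.2 (sub_ne_zero.2 hne)
  rw [hg₀, sub_zero] at hz
  have herr : -(C / 2 * ‖z - x₀‖ * ‖z - x₀‖) ≤ (g z - B (z - x₀)) (z - x₀) :=
    neg_le_of_abs_le (((g z - B (z - x₀)).le_opNorm _).trans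
      (mul_le_mul_of_nonneg_right hz (norm_nonneg _)))
  have := hCB (z - x₀)
  simp only [_root_.sub_apply] at herr
  nlinarith [mul_pos hC (mul_pos hw hw)]

theorem IsCoercive.eventually_gt_of_hasFDerivAt (hB : IsCoercive B)
    (hf : ∀ᶠ y in 𝓝 x₀, HasFDerivAt f (g y) y) (hg : HasFDerivAt g B x₀) (hg₀ : g x₀ = 0) :
    ∀ᶠ y in 𝓝[≠] x₀, f x₀ < f y := by
  obtain ⟨δ, hδ, hball⟩ :=
    Metric.eventually_nhds_iff_ball.1 (hf.and (hB.eventually_pos_apply_sub hg hg₀))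
  filter_upwards [inter_mem_nhdsWithin _ (Metric.ball_mem_nhds x₀ hδ)] with y ⟨hne, hy⟩
  set v := y - x₀
  have hv : v ≠ 0 := sub_ne_zero.2 hne
  have hseg : ∀ t ∈ Icc (0 : ℝ) 1, x₀ + t • v ∈ Metric.ball x₀ δ := fun t ht =>
    (convex_ball x₀ δ).add_smul_sub_mem (Metric.mem_ball_self hδ) hy ht
  have hderiv : ∀ t ∈ Icc (0 : ℝ) 1,
      HasDerivAt (fun s => f (x₀ + s • v)) (g (x₀ + t • v) v) t := fun t ht =>
    (hball _ (hseg t ht)).1.comp_hasDerivAt t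
      (by simpa using ((hasDerivAt_id t).smul_const v).const_add x₀)
  obtain ⟨τ, hτ, hslope⟩ := exists_hasDerivAt_eq_slope (fun s => f (x₀ + s • v)) _ zero_lt_one
    (fun t ht => (hderiv t ht).continuousAt.continuousWithinAt)
    (fun t ht => hderiv t (Ioo_subset_Icc_self ht))
  have hpos : 0 < g (x₀ + τ • v) (τ • v) := by
    simpa using (hball _ (hseg τ (Ioo_subset_Icc_self hτ))).2 (by simpa using ⟨hτ.1.ne', hv⟩)
  rw [map_smul, smul_eq_mul, hslope] at hpos
  simpa [v] using (pos_of_mul_pos_right hpos hτ.1.le)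

theorem IsCoercive.eventually_gt_and_eventually_ne_zero (hB : IsCoercive B)
    (hf : ∀ᶠ y in 𝓝 x₀, HasFDerivAt f (g y) y) (hg : HasFDerivAt g B x₀) (hg₀ : g x₀ = 0) :
    (∀ᶠ y in 𝓝[≠] x₀, f x₀ < f y) ∧ ∀ᶠ y in 𝓝[≠] x₀, g y ≠ 0 :=
  ⟨hB.eventually_gt_of_hasFDerivAt hf hg hg₀, hg.eventually_ne hB.exists_antilipschitzWith⟩

theorem IsCoercive.eventually_lt_and_eventually_ne_zero_of_neg (hB : IsCoercive (-B))
    (hf : ∀ᶠ y in 𝓝 x₀, HasFDerivAt f (g y) y) (hg : HasFDerivAt g B x₀) (hg₀ : g x₀ = 0) :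
    (∀ᶠ y in 𝓝[≠] x₀, f y < f x₀) ∧ ∀ᶠ y in 𝓝[≠] x₀, g y ≠ 0 := by
  obtain ⟨hmin, hcrit⟩ := hB.eventually_gt_and_eventually_ne_zero (f := fun y => -f y)
    (hf.mono fun y hy => hy.neg) hg.neg (by simp [hg₀])
  exact ⟨hmin.mono fun y => neg_lt_neg_iff.1, hcrit.mono fun y => neg_ne_zero.1⟩

end SecondDerivativeTest

section MatrixCalculus

variable {E : Type*} [NormedAddCommGroup E] [NormedSpace ℝ E] {ι : Type*} [Fintype ι]
  [DecidableEq ι] {M : E → Matrix ι ι ℝ} {x : E} {k : WithTop ℕ∞}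

theorem ContDiffAt.fderiv_right_infty {f : E → ℝ} (hf : ContDiffAt ℝ ∞ f x) : ContDiffAt ℝ ∞ (fderiv ℝ f) x :=
  hf.fderiv_right (le_of_eq (by simp))

theorem ContDiffAt.matrix_det (hM : ∀ i j, ContDiffAt ℝ k (fun y => M y i j) x) :
    ContDiffAt ℝ k (fun y => (M y).det) x := by
  simp only [Matrix.det_apply']
  exact ContDiffAt.sum fun σ _ => contDiffAt_const.mul (contDiffAt_prod fun i _ => hM _ _)

theorem ContDiffAt.matrix_inv_apply (hM : ∀ i j, ContDiffAt ℝ k (fun y => M y i j) x)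
    (hdet : (M x).det ≠ 0) (i j : ι) : ContDiffAt ℝ k (fun y => (M y)⁻¹ i j) x := by
  have hadj : ∀ y, (M y)⁻¹ i j = ((M y).det)⁻¹ * ((M y).updateRow j (Pi.single i 1)).det := by
    intro y
    simp [Matrix.inv_def, Ring.inverse_eq_inv', Matrix.adjugate_apply]
  simp only [hadj]
  refine ((ContDiffAt.matrix_det hM).inv hdet).mul (ContDiffAt.matrix_det fun a b => ?_)
  by_cases ha : a = j
  · simp only [Matrix.updateRow_apply, ha, if_true]
    exact contDiffAt_const
  · simp only [Matrix.updateRow_apply, ha, if_false]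
    exact hM a b

theorem sum_apply_mul_inv_apply_mul {N : Matrix ι ι ℝ} (hN : IsUnit N.det) (b : ι → ℝ) (i : ι) :
    ∑ l, ∑ k, N i l * (N⁻¹ l k * b k) = b i := by
  have h := congrFun (show N *ᵥ (N⁻¹ *ᵥ b) = b by
    rw [mulVec_mulVec, mul_nonsing_inv _ hN, one_mulVec]) i
  simpa [mulVec, dotProduct, Finset.mul_sum] using h

theorem dotProduct_mulVec_of_apply_single (B : (ι → ℝ) →L[ℝ] (ι → ℝ) →L[ℝ] ℝ) (v : ι → ℝ) :
    v ⬝ᵥ (Matrix.of fun i j => B (Pi.single j 1) (Pi.single i 1)) *ᵥ v = B v v := by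
  have hsingle : ∀ i, Pi.single i (v i) = v i • (Pi.single i 1 : ι → ℝ) := fun i => by
    rw [← Pi.single_smul, smul_eq_mul, mul_one]
  conv_rhs => rw [← Finset.univ_sum_single v]
  simp only [hsingle, map_sum, map_smul, FunLike.coe_sum, Finset.sum_apply, _root_.smul_apply,
    smul_eq_mul, dotProduct, mulVec, Finset.mul_sum, of_apply]
  exact Finset.sum_congr rfl fun i _ => Finset.sum_congr rfl fun j _ => by ring

end MatrixCalculus

variable {n : ℕ}

theorem contDiffAt_pd {f : (Fin n → ℝ) → ℝ} {x : Fin n → ℝ} (i : Fin n)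
    (hf : ContDiffAt ℝ ∞ f x) : ContDiffAt ℝ ∞ (pd i f) x :=
  hf.fderiv_right_infty.clm_apply contDiffAt_const

theorem pd_mul {a b : (Fin n → ℝ) → ℝ} {x : Fin n → ℝ} (ha : DifferentiableAt ℝ a x)
    (hb : DifferentiableAt ℝ b x) (j : Fin n) :
    pd j (fun y => a y * b y) x = a x * pd j b x + b x * pd j a x := by
  simp [pd, fderiv_fun_mul ha hb]

theorem pd_pd_eq_fderiv_fderiv {f : (Fin n → ℝ) → ℝ} {x : Fin n → ℝ}
    (hf : DifferentiableAt ℝ (fderiv ℝ f) x) (i j : Fin n) :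
    pd i (pd j f) x = fderiv ℝ (fderiv ℝ f) x (Pi.single i 1) (Pi.single j 1) := by
  change fderiv ℝ (fun y => fderiv ℝ f y (Pi.single j 1)) x (Pi.single i 1) = _
  rw [fderiv_clm_apply hf (differentiableAt_const _)]
  simp

theorem sum_mul_pd_inv_mul_pd {H : (Fin n → ℝ) → Matrix (Fin n) (Fin n) ℝ}
    {f : (Fin n → ℝ) → ℝ} {x : Fin n → ℝ}
    (hH : ∀ l k, DifferentiableAt ℝ (fun y => (H y)⁻¹ l k) x) (hx : IsUnit (H x).det)
    (hf : DifferentiableAt ℝ (fderiv ℝ f) x) (hcrit : fderiv ℝ f x = 0) (i j : Fin n) :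
    ∑ l, ∑ k, H x i l * pd j (fun y => (H y)⁻¹ l k * pd k f y) x = pd j (pd i f) x := by
  have hprod : ∀ l k, pd j (fun y => (H y)⁻¹ l k * pd k f y) x = (H x)⁻¹ l k * pd j (pd k f) x :=
    fun l k => by
      rw [pd_mul (b := pd k f) (hH l k) (hf.clm_apply (differentiableAt_const _))]
      simp [pd, hcrit]
  simp only [hprod, sum_apply_mul_inv_apply_mul hx (fun k => pd j (pd k f) x)]

section ToricPotential

variable {u : (Fin n → ℝ) → ℝ} {x : Fin n → ℝ}

theorem contDiffAt_hess_apply (hu : ContDiffAt ℝ ∞ u x) (i j : Fin n) :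
    ContDiffAt ℝ ∞ (fun y => Hess u y i j) x :=
  contDiffAt_pd i (contDiffAt_pd j hu)

theorem orbVol_pos (hdet : 0 < (Hess u x).det) : 0 < orbVol u x :=
  Real.rpow_pos_of_pos hdet _

theorem contDiffAt_orbVol (hu : ContDiffAt ℝ ∞ u x) (hdet : 0 < (Hess u x).det) :
    ContDiffAt ℝ ∞ (orbVol u) x :=
  (ContDiffAt.matrix_det (contDiffAt_hess_apply hu)).rpow_const_of_ne hdet.ne'

theorem contDiffAt_log_orbVol (hu : ContDiffAt ℝ ∞ u x) (hdet : 0 < (Hess u x).det) :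
    ContDiffAt ℝ ∞ (fun z => Real.log (orbVol u z)) x :=
  (contDiffAt_orbVol hu hdet).log (orbVol_pos hdet).ne'

theorem fderiv_log_orbVol_eq_zero_iff (hu : ContDiffAt ℝ ∞ u x) (hdet : 0 < (Hess u x).det) :
    fderiv ℝ (fun z => Real.log (orbVol u z)) x = 0 ↔ fderiv ℝ (orbVol u) x = 0 := by
  rw [fderiv.log ((contDiffAt_orbVol hu hdet).differentiableAt (by simp)) (orbVol_pos hdet).ne',
    smul_eq_zero, or_iff_right (inv_ne_zero (orbVol_pos hdet).ne')]

theorem ricA_eq_neg_of_fderiv_eq_zero (hu : ContDiffAt ℝ ∞ u x) (hdet : 0 < (Hess u x).det)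
    (hcrit : fderiv ℝ (fun z => Real.log (orbVol u z)) x = 0) :
    ricA u x = -Matrix.of fun i j => pd j (pd i fun z => Real.log (orbVol u z)) x := by
  ext i j
  rw [neg_apply, of_apply, ricA, of_apply, sum_mul_pd_inv_mul_pd
    (fun l k => (ContDiffAt.matrix_inv_apply (contDiffAt_hess_apply hu) hdet.ne' l k).differentiableAt
      (by simp)) (isUnit_iff_ne_zero.2 hdet.ne')
    ((contDiffAt_log_orbVol hu hdet).fderiv_right_infty.differentiableAt (by simp)) hcrit]

theorem dotProduct_ricA_mulVec_of_fderiv_eq_zero (hu : ContDiffAt ℝ ∞ u x)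
    (hdet : 0 < (Hess u x).det) (hcrit : fderiv ℝ (fun z => Real.log (orbVol u z)) x = 0)
    (v : Fin n → ℝ) :
    v ⬝ᵥ ricA u x *ᵥ v = -fderiv ℝ (fderiv ℝ fun z => Real.log (orbVol u z)) x v v := by
  have hf := (contDiffAt_log_orbVol hu hdet).fderiv_right_infty.differentiableAt (by simp)
  simp only [ricA_eq_neg_of_fderiv_eq_zero hu hdet hcrit, pd_pd_eq_fderiv_fderiv hf, neg_mulVec,
    dotProduct_neg, dotProduct_mulVec_of_apply_single]

end ToricPotential

theorem stmt6 (n : ℕ) (Ω : Set (Fin n → ℝ)) (hΩ : IsOpen Ω)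
    (u : (Fin n → ℝ) → ℝ) (hu : ContDiffOn ℝ (⊤ : ℕ∞) u Ω)
    (hpos : ∀ x ∈ Ω, (Hess u x).PosDef)
    (x₀ : Fin n → ℝ) (hx₀ : x₀ ∈ Ω)
    (hcrit : fderiv ℝ (orbVol u) x₀ = 0) :
    ((ricA u x₀).PosDef →
      (∀ᶠ y in 𝓝[≠] x₀, orbVol u y < orbVol u x₀) ∧
      (∀ᶠ y in 𝓝[≠] x₀, fderiv ℝ (orbVol u) y ≠ 0)) ∧
    ((-(ricA u x₀)).PosDef →
      (∀ᶠ y in 𝓝[≠] x₀, orbVol u x₀ < orbVol u y) ∧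
      (∀ᶠ y in 𝓝[≠] x₀, fderiv ℝ (orbVol u) y ≠ 0)) := by
  set f : (Fin n → ℝ) → ℝ := fun z => Real.log (orbVol u z)
  have hreg : ∀ᶠ y in 𝓝 x₀, ContDiffAt ℝ ∞ u y ∧ 0 < (Hess u y).det :=
    eventually_of_mem (hΩ.mem_nhds hx₀) fun y hy =>
      ⟨hu.contDiffAt (hΩ.mem_nhds hy), (hpos y hy).det_pos⟩
  obtain ⟨hu₀, hdet₀⟩ := hreg.self_of_nhds
  have hf : ∀ᶠ y in 𝓝 x₀, HasFDerivAt f (fderiv ℝ f y) y := hreg.mono fun y hy =>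
    ((contDiffAt_log_orbVol hy.1 hy.2).differentiableAt (by simp)).hasFDerivAt
  have hg : HasFDerivAt (fderiv ℝ f) (fderiv ℝ (fderiv ℝ f) x₀) x₀ :=
    ((contDiffAt_log_orbVol hu₀ hdet₀).fderiv_right_infty.differentiableAt (by simp)).hasFDerivAt
  have hf₀ : fderiv ℝ f x₀ = 0 := (fderiv_log_orbVol_eq_zero_iff hu₀ hdet₀).2 hcrit
  have hquad := dotProduct_ricA_mulVec_of_fderiv_eq_zero hu₀ hdet₀ hf₀
  have hV : ∀ᶠ y in 𝓝[≠] x₀, 0 < orbVol u y ∧ (fderiv ℝ f y ≠ 0 → fderiv ℝ (orbVol u) y ≠ 0) :=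
    (hreg.filter_mono nhdsWithin_le_nhds).mono fun y hy =>
      ⟨orbVol_pos hy.2, (fderiv_log_orbVol_eq_zero_iff hy.1 hy.2).not.1⟩
  have hV₀ : 0 < orbVol u x₀ := orbVol_pos hdet₀
  refine ⟨fun hR => ?_, fun hR => ?_⟩
  · have hB : IsCoercive (-fderiv ℝ (fderiv ℝ f) x₀) := .of_forall_pos fun v hv => by
      simpa [hquad] using hR.dotProduct_mulVec_pos hv
    obtain ⟨hmax, hiso⟩ := hB.eventually_lt_and_eventually_ne_zero_of_neg hf hg hf₀
    exact ⟨(hmax.and hV).mono fun y h => (Real.log_lt_log_iff h.2.1 hV₀).1 h.1,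
      (hiso.and hV).mono fun y h => h.2.2 h.1⟩
  · have hB : IsCoercive (fderiv ℝ (fderiv ℝ f) x₀) := .of_forall_pos fun v hv => by
      simpa [neg_mulVec, hquad] using hR.dotProduct_mulVec_pos hv
    obtain ⟨hmin, hiso⟩ := hB.eventually_gt_and_eventually_ne_zero hf hg hf₀
    exact ⟨(hmin.and hV).mono fun y h => (Real.log_lt_log_iff hV₀ h.2.1).1 h.1,
      (hiso.and hV).mono fun y h => h.2.2 h.1⟩
end

section
/- Let Δ° = {(x₁,x₂) ∈ ℝ² : x₁ > 0, x₂ > 0, x₁ + x₂ < 1}, let u_G(x₁,x₂) = (1/2)(x₁ log x₁ − x₁ + x₂ log x₂ − x₂ + (1−x₁−x₂) log(1−x₁−x₂) − (1−x₁−x₂)), and let f be a smooth real-valued function on an open interval containing (0,1) satisfying 1 + t(1−t) f''(t) > 0 for all t ∈ (0,1). Then every critical point (x₁,x₂) ∈ Δ° of the function det Hess(u_G + (1/2) f(x₁+x₂)) satisfies x₁ = x₂. -/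
/-!
Write `s = x₀ + x₁`. The potential splits as `½(x₀ log x₀ - x₀) + ½(x₁ log x₁ - x₁)` plus a
function of `s`, so its Hessian is a diagonal matrix plus a constant matrix, and on the simplex
`det Hess = ((1 - s)⁻¹ + s f''(s)) / 4 / (x₀ x₁)`. Along the anti-diagonal direction `(1, -1)` the
numerator is constant, so at a critical point the derivative of `1 / (x₀ x₁)` in that direction,
which is proportional to `x₀ - x₁`, must vanish. The numerator is nonzero since `(1 - s)` times it
is `1 + s(1 - s) f''(s) > 0`.
-/

open Real Set Topology Filter Matrix

/-- Guillemin symplectic potential of `ℂP²` on the standard simplex. -/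
noncomputable def uGCP2 : (Fin 2 → ℝ) → ℝ := fun x =>
  (1/2) * (x 0 * Real.log (x 0) - x 0 + x 1 * Real.log (x 1) - x 1
    + (1 - x 0 - x 1) * Real.log (1 - x 0 - x 1) - (1 - x 0 - x 1))

/-- The open standard simplex in `ℝ²`. -/
def simplex2 : Set (Fin 2 → ℝ) := {x | 0 < x 0 ∧ 0 < x 1 ∧ x 0 + x 1 < 1}

section Hessian

variable {n : ℕ}

theorem HasFDerivAt.pd_eq {g : (Fin n → ℝ) → ℝ} {g' : (Fin n → ℝ) →L[ℝ] ℝ} {y : Fin n → ℝ}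
    (hg : HasFDerivAt g g' y) (i : Fin n) : pd i g y = g' (Pi.single i 1) := by
  rw [pd, hg.fderiv]

theorem hasFDerivAt_comp_apply {φ : ℝ → ℝ} {φ' : ℝ} {y : Fin n → ℝ} {k : Fin n}
    (hφ : HasDerivAt φ φ' (y k)) :
    HasFDerivAt (fun z : Fin n → ℝ => φ (z k))
      (φ' • (ContinuousLinearMap.proj k : (Fin n → ℝ) →L[ℝ] ℝ)) y :=
  hφ.comp_hasFDerivAt y (hasFDerivAt_apply k y)

theorem hasFDerivAt_comp_sum {φ : ℝ → ℝ} {φ' : ℝ} {y : Fin n → ℝ}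
    (hφ : HasDerivAt φ φ' (∑ k, y k)) :
    HasFDerivAt (fun z : Fin n → ℝ => φ (∑ k, z k))
      (φ' • ∑ k, (ContinuousLinearMap.proj k : (Fin n → ℝ) →L[ℝ] ℝ)) y :=
  hφ.comp_hasFDerivAt y (HasFDerivAt.fun_sum fun k _ => hasFDerivAt_apply k y)

theorem pd_comp_apply_add_comp_sum {φ ψ : ℝ → ℝ} {φ' ψ' : ℝ} {y : Fin n → ℝ} {j : Fin n}
    (hφ : HasDerivAt φ φ' (y j)) (hψ : HasDerivAt ψ ψ' (∑ k, y k)) (i : Fin n) :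
    pd i (fun z => φ (z j) + ψ (∑ k, z k)) y = (if i = j then φ' else 0) + ψ' := by
  rw [((hasFDerivAt_comp_apply hφ).fun_add (hasFDerivAt_comp_sum hψ)).pd_eq]
  simp [Pi.single_apply, eq_comm]

theorem pd_sum_comp_apply_add_comp_sum {α : Fin n → ℝ → ℝ} {a : Fin n → ℝ} {γ : ℝ → ℝ}
    {c : ℝ} {y : Fin n → ℝ} (hα : ∀ k, HasDerivAt (α k) (a k) (y k))
    (hγ : HasDerivAt γ c (∑ k, y k)) (i : Fin n) :
    pd i (fun z => ∑ k, α k (z k) + γ (∑ k, z k)) y = a i + c := by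
  rw [((HasFDerivAt.fun_sum fun k _ => hasFDerivAt_comp_apply (hα k)).fun_add
    (hasFDerivAt_comp_sum hγ)).pd_eq]
  simp [Pi.single_apply]

theorem hess_sum_comp_apply_add_comp_sum {α α' : Fin n → ℝ → ℝ} {a : Fin n → ℝ}
    {γ γ' : ℝ → ℝ} {c : ℝ} {y : Fin n → ℝ}
    (hα : ∀ k, ∀ᶠ t in 𝓝 (y k), HasDerivAt (α k) (α' k t) t)
    (hα' : ∀ k, HasDerivAt (α' k) (a k) (y k))
    (hγ : ∀ᶠ t in 𝓝 (∑ k, y k), HasDerivAt γ (γ' t) t) (hγ' : HasDerivAt γ' c (∑ k, y k)) :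
    Hess (fun z => ∑ k, α k (z k) + γ (∑ k, z k)) y = diagonal a + of fun _ _ => c := by
  ext i j
  have hgrad : pd j (fun z => ∑ k, α k (z k) + γ (∑ k, z k)) =ᶠ[𝓝 y]
      fun z => α' j (z j) + γ' (∑ k, z k) := by
    have hα_near : ∀ᶠ z in 𝓝 y, ∀ k, HasDerivAt (α k) (α' k (z k)) (z k) :=
      eventually_all.2 fun k => ((continuous_apply k).tendsto y).eventually (hα k)
    have hγ_near : ∀ᶠ z in 𝓝 y, HasDerivAt γ (γ' (∑ k, z k)) (∑ k, z k) :=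
      ((continuous_finsetSum _ fun k _ => continuous_apply k).tendsto y).eventually hγ
    filter_upwards [hα_near, hγ_near] with z hαz hγz
    exact pd_sum_comp_apply_add_comp_sum hαz hγz j
  rw [Hess, of_apply, pd, hgrad.fderiv_eq, ← pd, pd_comp_apply_add_comp_sum (hα' j) hγ' i]
  rcases eq_or_ne i j with rfl | hij <;> simp [*]

end Hessian

theorem eq_of_fderiv_eq_zero_of_eventuallyEq_div_mul {φ : ℝ → ℝ} {F : (Fin 2 → ℝ) → ℝ}
    {x : Fin 2 → ℝ} (hF : F =ᶠ[𝓝 x] fun y => φ (y 0 + y 1) / (y 0 * y 1))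
    (hφ : DifferentiableAt ℝ φ (x 0 + x 1)) (hφx : φ (x 0 + x 1) ≠ 0)
    (hx0 : x 0 ≠ 0) (hx1 : x 1 ≠ 0) (hcrit : fderiv ℝ F x = 0) : x 0 = x 1 := by
  set G : (Fin 2 → ℝ) → ℝ := fun y => φ (y 0 + y 1) / (y 0 * y 1)
  have hG : HasFDerivAt G (0 : (Fin 2 → ℝ) →L[ℝ] ℝ) x := by
    have hsum : DifferentiableAt ℝ (fun y : Fin 2 → ℝ => y 0 + y 1) x := by fun_prop
    have hprod : DifferentiableAt ℝ (fun y : Fin 2 → ℝ => y 0 * y 1) x := by fun_prop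
    have hdiff : DifferentiableAt ℝ G x := by
      simp only [G, div_eq_mul_inv]
      exact (hφ.comp x hsum).fun_mul (hprod.fun_inv (mul_ne_zero hx0 hx1))
    rw [← hcrit, hF.fderiv_eq]
    exact hdiff.hasFDerivAt
  set v : Fin 2 → ℝ := ![1, -1]
  have hzero : HasDerivAt (fun t : ℝ => G (x + t • v)) 0 0 := by
    have hline : HasDerivAt (fun t : ℝ => x + t • v) v 0 := by
      simpa using ((hasDerivAt_id (0:ℝ)).smul_const v).const_add x
    simpa [Function.comp_def] using hG.comp_hasDerivAt_of_eq 0 hline (by simp)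
  have hexplicit : HasDerivAt (fun t : ℝ => G (x + t • v))
      (φ (x 0 + x 1) * (x 0 - x 1) / (x 0 * x 1) ^ 2) 0 := by
    have hG_line : (fun t : ℝ => G (x + t • v)) =
        fun t => φ (x 0 + x 1) / ((x 0 + t) * (x 1 - t)) := by
      ext t
      simp only [G, v, Pi.add_apply, Pi.smul_apply, smul_eq_mul, cons_val_zero, cons_val_one]
      ring_nf
    rw [hG_line]
    have hprod : HasDerivAt (fun t : ℝ => (x 0 + t) * (x 1 - t)) (x 1 - x 0) 0 :=
      (((hasDerivAt_id' (0:ℝ)).const_add (x 0)).fun_mul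
        ((hasDerivAt_id' (0:ℝ)).const_sub (x 1))).congr_deriv (by ring)
    exact ((hasDerivAt_const (0:ℝ) (φ (x 0 + x 1))).fun_div hprod
      (by simp [hx0, hx1])).congr_deriv (by ring)
  have hvanish : φ (x 0 + x 1) * (x 0 - x 1) = 0 := by
    simpa [hx0, hx1] using hexplicit.unique hzero
  exact sub_eq_zero.1 ((mul_eq_zero.1 hvanish).resolve_left hφx)

theorem isOpen_simplex2 : IsOpen simplex2 :=
  (isOpen_lt continuous_const (continuous_apply 0)).inter
    ((isOpen_lt continuous_const (continuous_apply 1)).inter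
      (isOpen_lt ((continuous_apply 0).add (continuous_apply 1)) continuous_const))

theorem hasDerivAt_mul_log_sub_self {t : ℝ} (ht : t ≠ 0) :
    HasDerivAt (fun t => t * log t - t) (log t) t :=
  ((hasDerivAt_mul_log ht).sub (hasDerivAt_id t)).congr_deriv (by ring)

theorem uGCP2_add_comp_sum_eq (f : ℝ → ℝ) :
    (fun z => uGCP2 z + (1/2) * f (z 0 + z 1)) = fun z : Fin 2 → ℝ =>
      ∑ k, (z k * log (z k) - z k) / 2 +
        ((1 - ∑ k, z k) * log (1 - ∑ k, z k) - (1 - ∑ k, z k) + f (∑ k, z k)) / 2 := by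
  ext z
  simp only [uGCP2, Fin.sum_univ_two]
  ring_nf

theorem hess_uGCP2_add {f f' f'' : ℝ → ℝ}
    (hf : ∀ t ∈ Ioo (0:ℝ) 1, HasDerivAt f (f' t) t)
    (hf' : ∀ t ∈ Ioo (0:ℝ) 1, HasDerivAt f' (f'' t) t) {y : Fin 2 → ℝ} (hy : y ∈ simplex2) :
    Hess (fun z => uGCP2 z + (1/2) * f (z 0 + z 1)) y =
      diagonal (fun k => (y k)⁻¹ / 2) +
        of fun _ _ => ((1 - (y 0 + y 1))⁻¹ + f'' (y 0 + y 1)) / 2 := by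
  obtain ⟨hy0, hy1, hs1⟩ := hy
  have hpos : ∀ k, 0 < y k := Fin.forall_fin_two.2 ⟨hy0, hy1⟩
  have hs : ∑ k, y k ∈ Ioo (0:ℝ) 1 := by
    rw [Fin.sum_univ_two]; exact ⟨by linarith, hs1⟩
  rw [uGCP2_add_comp_sum_eq, ← Fin.sum_univ_two y]
  refine hess_sum_comp_apply_add_comp_sum (α := fun _ t => (t * log t - t) / 2)
    (α' := fun _ t => log t / 2)
    (γ := fun t => ((1 - t) * log (1 - t) - (1 - t) + f t) / 2)
    (γ' := fun t => (f' t - log (1 - t)) / 2) ?_ ?_ ?_ ?_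
  · intro k
    filter_upwards [Ioi_mem_nhds (hpos k)] with t ht
    exact (hasDerivAt_mul_log_sub_self ht.ne').div_const 2
  · exact fun k => (hasDerivAt_log (hpos k).ne').div_const 2
  · filter_upwards [Ioo_mem_nhds hs.1 hs.2] with t ht
    have h1t : (1 - t) ≠ 0 := by linarith [ht.2]
    exact (((hasDerivAt_mul_log_sub_self h1t).comp t ((hasDerivAt_id t).const_sub 1)).add
      (hf t ht)).div_const 2 |>.congr_deriv (by ring)
  · have h1s : (1 - ∑ k, y k) ≠ 0 := by linarith [hs.2]
    exact ((hf' _ hs).sub ((hasDerivAt_log h1s).comp _ ((hasDerivAt_id _).const_sub 1)))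
      |>.div_const 2 |>.congr_deriv (by ring)

theorem det_hess_uGCP2_add {f f' f'' : ℝ → ℝ}
    (hf : ∀ t ∈ Ioo (0:ℝ) 1, HasDerivAt f (f' t) t)
    (hf' : ∀ t ∈ Ioo (0:ℝ) 1, HasDerivAt f' (f'' t) t) {y : Fin 2 → ℝ} (hy : y ∈ simplex2) :
    (Hess (fun z => uGCP2 z + (1/2) * f (z 0 + z 1)) y).det =
      ((1 - (y 0 + y 1))⁻¹ + (y 0 + y 1) * f'' (y 0 + y 1)) / 4 / (y 0 * y 1) := by
  rw [hess_uGCP2_add hf hf' hy, det_fin_two]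
  obtain ⟨hy0, hy1, hs1⟩ := hy
  have h1s : 1 - (y 0 + y 1) ≠ 0 := by linarith
  simp only [Matrix.add_apply, diagonal_apply_eq, diagonal_apply_ne _ zero_ne_one,
    diagonal_apply_ne _ one_ne_zero, of_apply]
  field_simp
  ring

theorem stmt11_general (f : ℝ → ℝ) (I : Set ℝ) (hI1 : Ioo (0:ℝ) 1 ⊆ I)
    (hf : ContDiffOn ℝ (⊤ : ℕ∞) f I)
    (hpd : ∀ t ∈ Ioo (0:ℝ) 1, 0 < 1 + t * (1 - t) * deriv (deriv f) t)
    (x : Fin 2 → ℝ) (hx : x ∈ simplex2)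
    (hcrit : fderiv ℝ
      (fun y => (Hess (fun z => uGCP2 z + (1/2) * f (z 0 + z 1)) y).det) x = 0) :
    x 0 = x 1 := by
  have hf3 : ContDiffOn ℝ 3 f (Ioo 0 1) := (hf.mono hI1).of_le (WithTop.coe_le_coe.2 le_top)
  have hf2 : ContDiffOn ℝ 2 (deriv f) (Ioo 0 1) :=
    hf3.deriv_of_isOpen isOpen_Ioo (by norm_num)
  have hf1 : ContDiffOn ℝ 1 (deriv (deriv f)) (Ioo 0 1) :=
    hf2.deriv_of_isOpen isOpen_Ioo (by norm_num)
  have hs : x 0 + x 1 ∈ Ioo (0:ℝ) 1 := ⟨by linarith [hx.1, hx.2.1], hx.2.2⟩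
  refine eq_of_fderiv_eq_zero_of_eventuallyEq_div_mul
    (φ := fun t => ((1 - t)⁻¹ + t * deriv (deriv f) t) / 4) ?_ ?_ ?_ hx.1.ne' hx.2.1.ne' hcrit
  · filter_upwards [isOpen_simplex2.mem_nhds hx] with y hy
    exact det_hess_uGCP2_add
      (fun t ht => (hf3.differentiableOn (by norm_num)).hasDerivAt (isOpen_Ioo.mem_nhds ht))
      (fun t ht => (hf2.differentiableOn (by norm_num)).hasDerivAt (isOpen_Ioo.mem_nhds ht)) hy
  · have h1s : 1 - (x 0 + x 1) ≠ 0 := sub_ne_zero.2 hs.2.ne'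
    have hf''' := (hf1.differentiableOn one_ne_zero).differentiableAt (isOpen_Ioo.mem_nhds hs)
    fun_prop (disch := exact h1s)
  · have h1s : 0 < 1 - (x 0 + x 1) := sub_pos.2 hs.2
    have hnum : ((1 - (x 0 + x 1))⁻¹ + (x 0 + x 1) * deriv (deriv f) (x 0 + x 1)) / 4 =
        (1 + (x 0 + x 1) * (1 - (x 0 + x 1)) * deriv (deriv f) (x 0 + x 1)) /
          (4 * (1 - (x 0 + x 1))) := by
      field_simp
    exact hnum.trans_ne (div_pos (hpd _ hs) (by positivity)).ne'

theorem stmt11 (f : ℝ → ℝ) (I : Set ℝ) (hI : IsOpen I) (hI1 : Ioo (0:ℝ) 1 ⊆ I)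
    (hf : ContDiffOn ℝ (⊤ : ℕ∞) f I)
    (hpd : ∀ t ∈ Ioo (0:ℝ) 1, 0 < 1 + t * (1 - t) * deriv (deriv f) t)
    (x : Fin 2 → ℝ) (hx : x ∈ simplex2)
    (hcrit : fderiv ℝ
      (fun y => (Hess (fun z => uGCP2 z + (1/2) * f (z 0 + z 1)) y).det) x = 0) :
    x 0 = x 1 :=
  stmt11_general f I hI1 hf hpd x hx hcrit
end
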